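/- arXiv:1501.01741 — 2 statements merged into one kernel-verified Lean document; each statement's English description precedes it below -/
import Mathlib

section
/- Let G be a finite simple undirected graph on n vertices and let 2 ≤ k ≤ n. For every partition {S_1,…,S_k} of V(G) into k parts each of positive volume, Σ_{i=0}^{k-1} λ_i ≤ Σ_{1≤i<j≤k} e(S_i,S_j) · (1/vol(S_i) + 1/vol(S_j)). -/
/-! Ky Fan's principle: for a symmetric operator with eigenbasis `b` and eigenvalues `μ`, and
orthonormal `x₁, …, x_k`, one has `∑ ⟪xᵢ, T xᵢ⟫ = ∑ⱼ μⱼ tⱼ` with weights `tⱼ = ∑ᵢ ⟪bⱼ, xᵢ⟫²`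
in `[0, 1]` (Bessel) summing to `k` (Parseval), and such a weighted sum is at least the sum of
the `k` smallest eigenvalues. Apply it to `xᵢ = D^{1/2} 1_{Sᵢ} / √vol(Sᵢ)`, orthonormal because
the parts are disjoint, whose Rayleigh quotients are
`1 - e(Sᵢ, Sᵢ) / vol(Sᵢ) = ∑_{j ≠ i} e(Sᵢ, Sⱼ) / vol(Sᵢ)`; pairing `(i, j)` with `(j, i)` gives
the right-hand side. -/

open Matrix Finset

/-- The degree-based volume of a vertex subset: the sum of the degrees of its vertices. -/
def gvol {n : ℕ} (G : SimpleGraph (Fin n)) [DecidableRel G.Adj] (S : Finset (Fin n)) : ℕ :=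
  ∑ v ∈ S, G.degree v

/-- `eCount G S T` is the number of ordered pairs `(u, v)` with `u ∈ S`, `v ∈ T`, `u ~ v`. -/
def eCount {n : ℕ} (G : SimpleGraph (Fin n)) [DecidableRel G.Adj] (S T : Finset (Fin n)) : ℕ :=
  ∑ u ∈ S, ∑ v ∈ T, if G.Adj u v then 1 else 0

/-- The normalized Laplacian `D^{-1/2} (D - A) D^{-1/2}`, with the convention that
`(D^{-1/2})_{uu} = 0` for isolated vertices `u`. -/
noncomputable def normLap {n : ℕ} (G : SimpleGraph (Fin n)) [DecidableRel G.Adj] :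
    Matrix (Fin n) (Fin n) ℝ :=
  Matrix.diagonal (fun v => (Real.sqrt (G.degree v))⁻¹) * G.lapMatrix ℝ *
    Matrix.diagonal (fun v => (Real.sqrt (G.degree v))⁻¹)

/-- A partition of the vertex set into `k` parts, each of positive volume. -/
def IsVolPartition {n k : ℕ} (G : SimpleGraph (Fin n)) [DecidableRel G.Adj]
    (P : Fin k → Finset (Fin n)) : Prop :=
  (∀ i j, i ≠ j → Disjoint (P i) (P j)) ∧ (∀ v, ∃ i, v ∈ P i) ∧ (∀ i, 0 < gvol G (P i))

open scoped RealInnerProductSpace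

theorem sum_castLE_le_sum_mul_of_monotone {n k : ℕ} (hkn : k ≤ n) {lam : Fin n → ℝ}
    (hmono : Monotone lam) {t : Fin n → ℝ} (ht0 : ∀ j, 0 ≤ t j) (ht1 : ∀ j, t j ≤ 1)
    (hsum : ∑ j, t j = k) :
    ∑ i : Fin k, lam (Fin.castLE hkn i) ≤ ∑ j, lam j * t j := by
  set e : Fin n → ℝ := fun j => if (j : ℕ) < k then 1 else 0
  have reindex (f : Fin n → ℝ) : ∑ i : Fin k, f (Fin.castLE hkn i) = ∑ j, f j * e j := by
    refine Fintype.sum_of_injective _ (Fin.castLE_injective hkn) _ _ (fun j hj => ?_)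
      (fun i => by simp [e])
    have : ¬ (j : ℕ) < k := fun h => hj ⟨⟨j, h⟩, rfl⟩
    simp [e, this]
  have hesum : ∑ j, e j = k := by simpa using (reindex 1).symm
  -- `c` separates the first `k` values of `lam` from the others (for `k = 0`, `k - 1 = 0`)
  obtain ⟨c, hc⟩ : ∃ c, ∀ j, 0 ≤ (lam j - c) * (t j - e j) := by
    rcases n with _ | m
    · exact ⟨0, fun j => j.elim0⟩
    refine ⟨lam ⟨k - 1, by omega⟩, fun j => ?_⟩
    by_cases hj : (j : ℕ) < k
    · refine mul_nonneg_of_nonpos_of_nonpos ?_ (by simp [e, hj, ht1 j])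
      exact sub_nonpos.mpr (hmono (Fin.le_def.mpr (by simp; omega)))
    · refine mul_nonneg ?_ (by simp [e, hj, ht0 j])
      exact sub_nonneg.mpr (hmono (Fin.le_def.mpr (by simp; omega)))
  have hdiff : ∑ j, (lam j - c) * (t j - e j) =
      ∑ j, lam j * t j - ∑ j, lam j * e j - c * (∑ j, t j - ∑ j, e j) := by
    simp only [sub_mul, mul_sub, sum_sub_distrib, mul_sum]
    ring
  rw [hsum, hesum, sub_self, mul_zero, sub_zero] at hdiff
  rw [reindex]
  linarith [sum_nonneg fun j (_ : j ∈ univ) => hc j]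

theorem OrthonormalBasis.inner_map_self_eq_sum {ι E : Type*} [Fintype ι] [NormedAddCommGroup E]
    [InnerProductSpace ℝ E] (b : OrthonormalBasis ι ℝ E) {T : E →ₗ[ℝ] E} {μ : ι → ℝ}
    (hT : ∀ j, T (b j) = μ j • b j) (x : E) :
    ⟪x, T x⟫ = ∑ j, μ j * ⟪b j, x⟫ ^ 2 := by
  have hTx : T x = ∑ j, (μ j * ⟪b j, x⟫) • b j := by
    conv_lhs => rw [← b.sum_repr' x]
    simp only [map_sum, map_smul, hT, smul_smul, mul_comm]
  rw [hTx, inner_sum]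
  refine sum_congr rfl fun j _ => ?_
  rw [real_inner_smul_right, real_inner_comm]
  ring

theorem sum_castLE_le_sum_inner_map_of_orthonormal {E : Type*} [NormedAddCommGroup E]
    [InnerProductSpace ℝ E] {n k : ℕ} (hkn : k ≤ n) (b : OrthonormalBasis (Fin n) ℝ E)
    {T : E →ₗ[ℝ] E} {μ : Fin n → ℝ} (hT : ∀ j, T (b j) = μ j • b j) {lam : Fin n → ℝ}
    (hmono : Monotone lam) (σ : Equiv.Perm (Fin n)) (hσ : lam = μ ∘ σ) {x : Fin k → E}
    (hx : Orthonormal ℝ x) :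
    ∑ i : Fin k, lam (Fin.castLE hkn i) ≤ ∑ i, ⟪x i, T (x i)⟫ := by
  set t : Fin n → ℝ := fun j => ∑ i, ⟪b j, x i⟫ ^ 2 with ht
  have ht1 (j : Fin n) : t j ≤ 1 := by
    simpa [ht, real_inner_comm] using hx.sum_inner_products_le (b j) (s := univ)
  have hsum : ∑ j, t j = k := by
    rw [ht, sum_comm]
    simp [b.sum_sq_inner_right, hx.1]
  calc ∑ i : Fin k, lam (Fin.castLE hkn i)
      ≤ ∑ j, lam j * t (σ j) := sum_castLE_le_sum_mul_of_monotone hkn hmono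
        (fun j => sum_nonneg fun i _ => sq_nonneg _) (fun j => ht1 _)
        (by rw [Equiv.sum_comp σ t, hsum])
    _ = ∑ j, μ j * t j := by rw [hσ]; exact Equiv.sum_comp σ (fun j => μ j * t j)
    _ = ∑ i, ⟪x i, T (x i)⟫ := by
      simp only [ht, b.inner_map_self_eq_sum hT, mul_sum]
      exact sum_comm

theorem Matrix.IsHermitian.sum_castLE_le_sum_dotProduct_mulVec {n k : ℕ} (hkn : k ≤ n)
    {A : Matrix (Fin n) (Fin n) ℝ} (hA : A.IsHermitian) {lam : Fin n → ℝ} (hmono : Monotone lam)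
    (σ : Equiv.Perm (Fin n)) (hσ : lam = hA.eigenvalues ∘ σ) {x : Fin k → Fin n → ℝ}
    (hx : Orthonormal ℝ fun i => WithLp.toLp 2 (x i)) :
    ∑ i : Fin k, lam (Fin.castLE hkn i) ≤ ∑ i, x i ⬝ᵥ A *ᵥ x i := by
  have hT (j : Fin n) : toEuclideanLin A (hA.eigenvectorBasis j) =
      hA.eigenvalues j • hA.eigenvectorBasis j := by
    rw [toLpLin_apply, hA.mulVec_eigenvectorBasis]
    rfl
  convert sum_castLE_le_sum_inner_map_of_orthonormal hkn hA.eigenvectorBasis hT hmono σ hσ hx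
    using 2 with i
  rw [toLpLin_toLp, EuclideanSpace.inner_toLp_toLp, star_trivial, dotProduct_comm]
  rfl

theorem sum_sum_eq_sum_of_partition {ι α M : Type*} [Fintype ι] [Fintype α] [DecidableEq α]
    [AddCommMonoid M] {P : ι → Finset α} (hdisj : ∀ i j, i ≠ j → Disjoint (P i) (P j))
    (hcov : ∀ v, ∃ i, v ∈ P i) (f : α → M) :
    ∑ i, ∑ v ∈ P i, f v = ∑ v, f v := by
  have hunion : univ.biUnion P = univ := eq_univ_of_forall fun v => by simpa using hcov v
  rw [← sum_biUnion fun i _ j _ hij => hdisj i j hij, hunion]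

theorem sum_sub_diag_div_eq_sum_lt {ι : Type*} [Fintype ι] [LinearOrder ι] {e : ι → ι → ℝ}
    {w : ι → ℝ} (hsymm : ∀ i j, e i j = e j i) (hw : ∀ i, ∑ j, e i j = w i) :
    ∑ i, (w i - e i i) / w i = ∑ i, ∑ j, if i < j then e i j * (1 / w i + 1 / w j) else 0 := by
  have hoff (i : ι) : (w i - e i i) / w i = ∑ j, if i ≠ j then e i j / w i else 0 := by
    rw [← hw i, ← sum_erase_eq_sub (mem_univ i), sum_div, sum_ite, sum_const_zero, add_zero]
    congr 1
    ext j
    simp [eq_comm]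
  have hsplit (i j : ι) : (if i < j then e i j * (1 / w i + 1 / w j) else 0) =
      (if i < j then e i j / w i else 0) + (if i < j then e j i / w j else 0) := by
    split_ifs
    · rw [hsymm j i]
      ring
    · simp
  simp_rw [hoff, hsplit, sum_add_distrib]
  rw [sum_comm (f := fun i j => if i < j then e j i / w j else 0), ← sum_add_distrib]
  refine sum_congr rfl fun i _ => ?_
  rw [← sum_add_distrib]
  refine sum_congr rfl fun j _ => ?_
  rcases lt_trichotomy i j with h | rfl | h
  · simp [h, h.ne, h.not_gt]
  · simp
  · simp [h, h.ne', h.not_gt]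

section Graph

variable {n : ℕ} (G : SimpleGraph (Fin n)) [DecidableRel G.Adj]

theorem eCount_comm (S T : Finset (Fin n)) : eCount G S T = eCount G T S := by
  unfold eCount
  rw [sum_comm]
  simp_rw [G.adj_comm]

theorem sum_eCount_eq_gvol {k : ℕ} {P : Fin k → Finset (Fin n)}
    (hdisj : ∀ i j, i ≠ j → Disjoint (P i) (P j)) (hcov : ∀ v, ∃ i, v ∈ P i)
    (S : Finset (Fin n)) : ∑ j, eCount G S (P j) = gvol G S := by
  unfold eCount gvol
  rw [sum_comm]
  refine sum_congr rfl fun u _ => ?_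
  rw [sum_sum_eq_sum_of_partition hdisj hcov]
  simpa using (G.degree_eq_sum_if_adj (R := ℕ) u).symm

theorem dotProduct_normLap_mulVec (f : Fin n → ℝ) :
    (fun v => √(G.degree v) * f v) ⬝ᵥ normLap G *ᵥ (fun v => √(G.degree v) * f v) =
      f ⬝ᵥ G.lapMatrix ℝ *ᵥ f := by
  set g : Fin n → ℝ := fun v => if G.degree v = 0 then 0 else f v with hg
  have hdiag :
      Matrix.diagonal (fun v => (√(G.degree v))⁻¹) *ᵥ (fun v => √(G.degree v) * f v) = g := by
    ext v
    rw [mulVec_diagonal]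
    by_cases hv : G.degree v = 0 <;> simp [hg, hv]
  have hdiag' :
      (fun v => √(G.degree v) * f v) ᵥ* Matrix.diagonal (fun v => (√(G.degree v))⁻¹) = g := by
    rw [← hdiag]
    ext v
    rw [vecMul_diagonal, mulVec_diagonal, mul_comm]
  -- `g` forgets `f` only on isolated vertices, which the Laplacian form does not see
  have hadj {u v : Fin n} (h : G.Adj u v) : g u = f u := by
    simp [hg, (G.degree_pos_iff_exists_adj u).mpr ⟨v, h⟩ |>.ne']
  calc _ = g ⬝ᵥ G.lapMatrix ℝ *ᵥ g := by
        rw [normLap, ← mulVec_mulVec, ← mulVec_mulVec, hdiag, dotProduct_mulVec, hdiag']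
    _ = f ⬝ᵥ G.lapMatrix ℝ *ᵥ f := by
        rw [← toLinearMap₂'_apply', ← toLinearMap₂'_apply', G.lapMatrix_toLinearMap₂' (R := ℝ),
          G.lapMatrix_toLinearMap₂' (R := ℝ)]
        congr 1
        refine sum_congr rfl fun u _ => sum_congr rfl fun v _ => ?_
        split_ifs with h
        · rw [hadj h, hadj h.symm]
        · rfl

theorem indicator_dotProduct_lapMatrix_mulVec (S : Finset (Fin n)) (c : ℝ) :
    (fun v => if v ∈ S then c else 0) ⬝ᵥ G.lapMatrix ℝ *ᵥ (fun v => if v ∈ S then c else 0) =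
      c ^ 2 * (gvol G S - eCount G S S) := by
  rw [SimpleGraph.lapMatrix, sub_mulVec, dotProduct_sub, G.dotProduct_mulVec_degMatrix,
    G.dotProduct_mulVec_adjMatrix, gvol, eCount]
  push_cast
  simp_rw [mul_sub, mul_sum, ← Fintype.sum_ite_mem S]
  congr 1
  · refine sum_congr rfl fun u _ => ?_
    split_ifs <;> ring
  · refine sum_congr rfl fun u _ => ?_
    split_ifs with hu
    · refine sum_congr rfl fun v _ => ?_
      split_ifs <;> ring
    · simp

noncomputable def normalizedIndicator (S : Finset (Fin n)) : Fin n → ℝ :=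
  fun v => √(G.degree v) * if v ∈ S then (√(gvol G S))⁻¹ else 0

theorem normalizedIndicator_dotProduct_normLap_mulVec (S : Finset (Fin n)) :
    normalizedIndicator G S ⬝ᵥ normLap G *ᵥ normalizedIndicator G S =
      (gvol G S - eCount G S S) / gvol G S := by
  unfold normalizedIndicator
  rw [dotProduct_normLap_mulVec, indicator_dotProduct_lapMatrix_mulVec,
    inv_pow, Real.sq_sqrt (Nat.cast_nonneg _), inv_mul_eq_div]

theorem normalizedIndicator_dotProduct_of_disjoint {S T : Finset (Fin n)} (h : Disjoint S T) :
    normalizedIndicator G S ⬝ᵥ normalizedIndicator G T = 0 := by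
  refine sum_eq_zero fun v _ => ?_
  by_cases hv : v ∈ S <;> simp [normalizedIndicator, hv, disjoint_left.mp h]

theorem normalizedIndicator_dotProduct_self {S : Finset (Fin n)} (h : 0 < gvol G S) :
    normalizedIndicator G S ⬝ᵥ normalizedIndicator G S = 1 := by
  have hvol : (gvol G S : ℝ) ≠ 0 := by positivity
  calc _ = ∑ v ∈ S, (G.degree v : ℝ) / gvol G S := by
        rw [dotProduct, ← Fintype.sum_ite_mem S]
        refine sum_congr rfl fun v _ => ?_
        by_cases hv : v ∈ S
        · simp only [normalizedIndicator, hv, if_true]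
          rw [mul_mul_mul_comm, Real.mul_self_sqrt (Nat.cast_nonneg _), ← mul_inv,
            Real.mul_self_sqrt (Nat.cast_nonneg _), div_eq_mul_inv]
        · simp [normalizedIndicator, hv]
    _ = 1 := by rw [← sum_div, ← Nat.cast_sum]; exact div_self hvol

theorem orthonormal_normalizedIndicator {ι : Type*} {P : ι → Finset (Fin n)}
    (hdisj : ∀ i j, i ≠ j → Disjoint (P i) (P j)) (hvol : ∀ i, 0 < gvol G (P i)) :
    Orthonormal ℝ fun i => WithLp.toLp 2 (normalizedIndicator G (P i)) := by
  classical
  rw [orthonormal_iff_ite]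
  intro i j
  rw [EuclideanSpace.inner_toLp_toLp, star_trivial]
  split_ifs with h
  · subst h
    exact normalizedIndicator_dotProduct_self G (hvol i)
  · exact normalizedIndicator_dotProduct_of_disjoint G (hdisj j i (Ne.symm h))

end Graph

/-- For every partition of the vertices of `G` into `k` parts of positive volume,
`∑_{i=0}^{k-1} λ_i ≤ ∑_{i<j} e(S_i,S_j) (1/vol(S_i) + 1/vol(S_j))`. -/
theorem sum_eigenvalues_le_partition_sum {n k : ℕ} (hkn : k ≤ n)
    (G : SimpleGraph (Fin n)) [DecidableRel G.Adj]
    (hL : (normLap G).IsHermitian)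
    (lam : Fin n → ℝ) (hmono : Monotone lam)
    (hperm : ∃ σ : Equiv.Perm (Fin n), lam = hL.eigenvalues ∘ σ)
    (P : Fin k → Finset (Fin n)) (hP : IsVolPartition G P) :
    ∑ i : Fin k, lam (Fin.castLE hkn i) ≤
      ∑ i : Fin k, ∑ j : Fin k, if i < j then
        (eCount G (P i) (P j) : ℝ) * (1 / (gvol G (P i) : ℝ) + 1 / (gvol G (P j) : ℝ))
      else 0 := by
  obtain ⟨hdisj, hcov, hvol⟩ := hP
  obtain ⟨σ, hσ⟩ := hperm
  calc ∑ i : Fin k, lam (Fin.castLE hkn i)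
      ≤ ∑ i, normalizedIndicator G (P i) ⬝ᵥ normLap G *ᵥ normalizedIndicator G (P i) :=
        hL.sum_castLE_le_sum_dotProduct_mulVec hkn hmono σ hσ
          (orthonormal_normalizedIndicator G hdisj hvol)
    _ = ∑ i, ((gvol G (P i) : ℝ) - eCount G (P i) (P i)) / gvol G (P i) := by
        simp only [normalizedIndicator_dotProduct_normLap_mulVec]
    _ = _ := sum_sub_diag_div_eq_sum_lt (e := fun i j => (eCount G (P i) (P j) : ℝ))
        (fun i j => by rw [eCount_comm])
        (fun i => by exact_mod_cast sum_eCount_eq_gvol G hdisj hcov (P i))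
end

section
/- Let M be an n×n Hermitian matrix with eigenvalues λ_0 ≤ λ_1 ≤ … ≤ λ_{n-1} (listed with multiplicity), and fix k ≤ n. Then the minimum of tr(U* M U), taken over all n×k complex matrices U whose columns are orthonormal, equals Σ_{i=0}^{k-1} λ_i. In particular, for any orthonormal vectors f_1,…,f_k in ℂ^n, Σ_{i=1}^{k} f_i* M f_i ≥ Σ_{i=0}^{k-1} λ_i. -/
/-!
Write `M = V D V*` with `V` unitary and `D` diagonal, and put `W = V* U`. Then
`tr(U* M U) = ∑ⱼ λⱼ cⱼ` with `cⱼ = (W W*)ⱼⱼ`. Since `W W*` is an orthogonal projection of rank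
`k`, the weights satisfy `0 ≤ cⱼ ≤ 1` and `∑ cⱼ = k`, and among such weights the sum
`∑ λⱼ cⱼ` is smallest when the whole mass sits on the `k` smallest eigenvalues. Taking for `U`
the corresponding `k` eigenvectors attains this bound.
-/

open Matrix Finset
open scoped ComplexOrder

theorem sum_le_sum_mul_of_threshold {ι : Type*} [Fintype ι] (S : Finset ι) {lam c : ι → ℝ}
    {t : ℝ} (hS : ∀ j ∈ S, lam j ≤ t) (hSc : ∀ j ∉ S, t ≤ lam j) (hc0 : ∀ j, 0 ≤ c j)
    (hc1 : ∀ j, c j ≤ 1) (hc : ∑ j, c j = #S) :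
    ∑ j ∈ S, lam j ≤ ∑ j, lam j * c j := by
  classical
  have hterm : 0 ≤ ∑ j, (lam j - t) * (c j - if j ∈ S then 1 else 0) := by
    refine sum_nonneg fun j _ => ?_
    split_ifs with hj
    · nlinarith [hS j hj, hc1 j]
    · nlinarith [hSc j hj, hc0 j]
  have hexpand : ∑ j, (lam j - t) * (c j - if j ∈ S then 1 else 0)
      = ∑ j, lam j * c j - ∑ j ∈ S, lam j - t * (∑ j, c j - #S) := by
    simp only [mul_sub, sub_mul, sum_sub_distrib, mul_ite, mul_one, mul_zero, sum_ite_mem,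
      univ_inter, ← mul_sum, sum_const, nsmul_eq_mul]
    ring
  rw [hexpand, hc, sub_self, mul_zero] at hterm
  linarith

theorem sum_castLE_le_sum_mul {n k : ℕ} (hkn : k ≤ n) {lam : Fin n → ℝ} (hmono : Monotone lam)
    {c : Fin n → ℝ} (hc0 : ∀ j, 0 ≤ c j) (hc1 : ∀ j, c j ≤ 1) (hc : ∑ j, c j = k) :
    ∑ i : Fin k, lam (Fin.castLE hkn i) ≤ ∑ j, lam j * c j := by
  set S := univ.map (Fin.castLEEmb hkn)
  have hmem : ∀ j, j ∈ S ↔ (j : ℕ) < k := fun j => by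
    simp only [S, mem_map, mem_univ, true_and, Fin.castLEEmb_apply]
    exact ⟨by rintro ⟨i, rfl⟩; exact i.2, fun h => ⟨⟨j, h⟩, rfl⟩⟩
  obtain ⟨t, hlt, hge⟩ : ∃ t, (∀ j : Fin n, (j : ℕ) < k → lam j ≤ t) ∧
      ∀ j : Fin n, k ≤ (j : ℕ) → t ≤ lam j := by
    rcases Nat.eq_zero_or_pos k with rfl | hk
    · obtain ⟨t, ht⟩ := (Set.finite_range lam).bddBelow
      exact ⟨t, by simp, fun j _ => ht ⟨j, rfl⟩⟩
    · exact ⟨lam ⟨k - 1, by omega⟩, fun j hj => hmono (Fin.le_def.2 (by simp; omega)),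
        fun j hj => hmono (Fin.le_def.2 (by simp; omega))⟩
  simpa [S, sum_map] using sum_le_sum_mul_of_threshold S (fun j hj => hlt j ((hmem j).1 hj))
    (fun j hj => hge j (not_lt.1 (mt (hmem j).2 hj))) hc0 hc1 (by simpa [S] using hc)

variable {𝕜 m l : Type*} [RCLike 𝕜]

open RCLike

theorem re_diag_mul_conjTranspose_nonneg [Fintype m] [Fintype l] (W : Matrix m l 𝕜) (j : m) :
    0 ≤ re ((W * Wᴴ) j j) :=
  (nonneg_iff.1 (posSemidef_self_mul_conjTranspose W).diag_nonneg).1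

theorem re_diag_mul_conjTranspose_le_one [Fintype m] [DecidableEq m] [Fintype l] [DecidableEq l]
    {W : Matrix m l 𝕜} (hW : Wᴴ * W = 1) (j : m) :
    re ((W * Wᴴ) j j) ≤ 1 := by
  have hproj : (1 - W * Wᴴ)ᴴ * (1 - W * Wᴴ) = 1 - W * Wᴴ := by
    simp [conjTranspose_sub, sub_mul, mul_sub, Matrix.mul_assoc, ← Matrix.mul_assoc Wᴴ, hW]
  have h := (nonneg_iff.1 ((hproj ▸ posSemidef_conjTranspose_mul_self (1 - W * Wᴴ)).diag_nonneg
    (i := j))).1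
  simpa using h

theorem sum_re_diag_mul_conjTranspose [Fintype m] [Fintype l] [DecidableEq l] {W : Matrix m l 𝕜}
    (hW : Wᴴ * W = 1) :
    ∑ j, re ((W * Wᴴ) j j) = Fintype.card l := by
  have h : re (W * Wᴴ).trace = Fintype.card l := by simp [trace_mul_comm W, hW]
  simpa [Matrix.trace] using h

theorem re_trace_conjTranspose_mul_mul [Fintype m] [DecidableEq m] [Fintype l] {M : Matrix m m 𝕜} (hM : M.IsHermitian)
    (U : Matrix m l 𝕜) :
    re (Uᴴ * M * U).trace = ∑ j, hM.eigenvalues j *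
      re ((((star hM.eigenvectorUnitary : Matrix m m 𝕜) * U) *
        ((star hM.eigenvectorUnitary : Matrix m m 𝕜) * U)ᴴ) j j) := by
  set V : Matrix m m 𝕜 := (hM.eigenvectorUnitary : Matrix m m 𝕜)
  set W : Matrix m l 𝕜 := star V * U
  have hUMU : Uᴴ * M * U = Wᴴ * (diagonal (ofReal ∘ hM.eigenvalues) : Matrix m m 𝕜) * W := by
    conv_lhs => rw [hM.spectral_theorem, Unitary.conjStarAlgAut_apply]
    simp [W, V, conjTranspose_mul, Matrix.mul_assoc, star_eq_conjTranspose]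
  rw [hUMU, trace_mul_cycle, Matrix.trace, map_sum]
  simp [mul_diagonal, mul_comm]

theorem sum_castLE_eigenvalues_le_re_trace {n k : ℕ} (hkn : k ≤ n)
    {M : Matrix (Fin n) (Fin n) 𝕜} (hM : M.IsHermitian) {σ : Equiv.Perm (Fin n)}
    (hmono : Monotone (hM.eigenvalues ∘ σ)) {U : Matrix (Fin n) (Fin k) 𝕜} (hU : Uᴴ * U = 1) :
    ∑ i : Fin k, hM.eigenvalues (σ (Fin.castLE hkn i)) ≤ re (Uᴴ * M * U).trace := by
  set V : Matrix (Fin n) (Fin n) 𝕜 := (hM.eigenvectorUnitary : Matrix (Fin n) (Fin n) 𝕜)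
  set W : Matrix (Fin n) (Fin k) 𝕜 := star V * U
  have hW : Wᴴ * W = 1 :=
    calc Wᴴ * W = Uᴴ * (V * star V) * U := by
          simp [W, conjTranspose_mul, star_eq_conjTranspose, Matrix.mul_assoc]
      _ = 1 := by rw [mem_unitaryGroup_iff.mp hM.eigenvectorUnitary.2, Matrix.mul_one, hU]
  rw [re_trace_conjTranspose_mul_mul hM U, ← Equiv.sum_comp σ]
  refine sum_castLE_le_sum_mul hkn hmono (fun _ => re_diag_mul_conjTranspose_nonneg W _)
    (fun _ => re_diag_mul_conjTranspose_le_one hW _) ?_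
  rw [Equiv.sum_comp σ (fun j => re ((W * Wᴴ) j j)), sum_re_diag_mul_conjTranspose hW,
    Fintype.card_fin]

theorem conjTranspose_submatrix_mul_mul_submatrix {n : Type*} [Fintype n] (A : Matrix n m 𝕜)
    (X : Matrix n n 𝕜) (e : l → m) :
    (A.submatrix id e)ᴴ * X * A.submatrix id e = (Aᴴ * X * A).submatrix e e := by
  ext i j
  simp [mul_apply]

theorem exists_trace_eq_sum_eigenvalues [Fintype m] [DecidableEq m] [Fintype l] [DecidableEq l]
    {M : Matrix m m 𝕜} (hM : M.IsHermitian) (e : l ↪ m) :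
    ∃ U : Matrix m l 𝕜, Uᴴ * U = 1 ∧ (Uᴴ * M * U).trace = ∑ i, (hM.eigenvalues (e i) : 𝕜) := by
  set V : Matrix m m 𝕜 := (hM.eigenvectorUnitary : Matrix m m 𝕜)
  have hdiag : Vᴴ * M * V = diagonal (ofReal ∘ hM.eigenvalues) := by
    simpa [V, star_eq_conjTranspose] using hM.conjStarAlgAut_star_eigenvectorUnitary
  refine ⟨V.submatrix id e, ?_, ?_⟩
  · rw [← Matrix.mul_one (V.submatrix id e)ᴴ, conjTranspose_submatrix_mul_mul_submatrix]
    simp [V, ← star_eq_conjTranspose]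
  · rw [conjTranspose_submatrix_mul_mul_submatrix, hdiag, submatrix_diagonal_embedding,
      trace_diagonal]
    rfl

theorem conjTranspose_transpose_mul_mul_transpose [Fintype m] (f : l → m → 𝕜) (X : Matrix m m 𝕜) :
    ((of f)ᵀ)ᴴ * X * (of f)ᵀ = of fun i j => star (f i) ⬝ᵥ X *ᵥ f j := by
  ext i j
  simp only [mul_apply, conjTranspose_apply, transpose_apply, of_apply, dotProduct, mulVec,
    Pi.star_apply, sum_mul, mul_sum]
  rw [sum_comm]
  simp only [mul_assoc]

/-- Ky Fan / Courant–Fischer: for a Hermitian `n × n` matrix `M` with eigenvalues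
`λ_0 ≤ … ≤ λ_{n-1}` and `k ≤ n`, the minimum of `tr(U* M U)` over `n × k` matrices `U`
with orthonormal columns equals `∑_{i=0}^{k-1} λ_i`; in particular, for orthonormal
vectors `f_1, …, f_k`, `∑_i f_i* M f_i ≥ ∑_{i=0}^{k-1} λ_i`. -/
theorem trace_min_orthonormal_eq_sum_eigenvalues {n k : ℕ} (hkn : k ≤ n)
    (M : Matrix (Fin n) (Fin n) ℂ) (hM : M.IsHermitian)
    (lam : Fin n → ℝ) (hmono : Monotone lam)
    (hperm : ∃ σ : Equiv.Perm (Fin n), lam = hM.eigenvalues ∘ σ) :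
    IsLeast { x : ℝ | ∃ U : Matrix (Fin n) (Fin k) ℂ,
        Uᴴ * U = 1 ∧ (Uᴴ * M * U).trace = (x : ℂ) }
      (∑ i : Fin k, lam (Fin.castLE hkn i)) ∧
    ∀ f : Fin k → (Fin n → ℂ),
      (∀ i j, star (f i) ⬝ᵥ f j = if i = j then 1 else 0) →
      (∑ i : Fin k, lam (Fin.castLE hkn i)) ≤
        ∑ i : Fin k, (star (f i) ⬝ᵥ M.mulVec (f i)).re := by
  obtain ⟨σ, rfl⟩ := hperm
  have hlower := fun U (hU : Uᴴ * U = 1) => sum_castLE_eigenvalues_le_re_trace hkn hM hmono hU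
  refine ⟨⟨?_, ?_⟩, fun f hf => ?_⟩
  · obtain ⟨U, hU, htr⟩ :=
      exists_trace_eq_sum_eigenvalues hM ((Fin.castLEEmb hkn).trans σ.toEmbedding)
    exact ⟨U, hU, by simpa using htr⟩
  · rintro x ⟨U, hU, htr⟩
    simpa [htr] using hlower U hU
  · have hU : ((of f)ᵀ)ᴴ * (of f)ᵀ = 1 := by
      rw [← Matrix.mul_one ((of f)ᵀ)ᴴ, conjTranspose_transpose_mul_mul_transpose]
      ext i j
      simpa [one_apply] using hf i j
    simpa [conjTranspose_transpose_mul_mul_transpose, Matrix.trace] using hlower _ hU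
end
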